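/- arXiv:1309.5628 — 3 statements merged into one kernel-verified Lean document; each statement's English description precedes it below -/
import Mathlib

section
/- Let τᵢ (i = 1,…,n) and τ be triangle functions on Δ⁺ with τ ≤ τᵢ pointwise for each i, let γⁱ: Σ → Δ⁺ be τᵢ-decomposable submeasures on a ring Σ, and let α: (Δ⁺)ⁿ → Δ⁺ be an n-ary aggregation operator (nondecreasing in each coordinate with α(ε₀,…,ε₀) = ε₀) that dominates τ. Then γ(E) := α(γ¹(E), …, γⁿ(E)) is a τ-decomposable submeasure on Σ: γ(∅) = ε₀ and γ(E ∪ F) ≥ τ(γ(E), γ(F)) for all disjoint E, F ∈ Σ. -/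
open scoped ENNReal NNReal symmDiff

/-- Distance distribution function: nondecreasing, left-continuous,
`F 0 = 0`, `F ∞ = 1`, with values in `[0,1]`. -/
structure DDF where
  toFun : ℝ≥0∞ → ℝ
  mono : Monotone toFun
  left_cont : ∀ x, ContinuousWithinAt toFun (Set.Iio x) x
  map_zero : toFun 0 = 0
  map_top : toFun ⊤ = 1
  nonneg : ∀ x, 0 ≤ toFun x
  le_one : ∀ x, toFun x ≤ 1

/-- Pointwise order on `Δ⁺`. -/
instance : LE DDF := ⟨fun G H => ∀ x, G.toFun x ≤ H.toFun x⟩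

/-- `ε_a` for finite `a ≥ 0`. -/
noncomputable def epsD (a : ℝ≥0) : DDF where
  toFun := fun x => if (a : ℝ≥0∞) < x then 1 else 0
  mono := by
    intro x y hxy
    dsimp only
    split_ifs with h1 h2
    · exact le_refl _
    · exact absurd (lt_of_lt_of_le h1 hxy) h2
    · norm_num
    · exact le_refl _
  left_cont := by
    intro x
    by_cases hx : (a : ℝ≥0∞) < x
    · have h1 : (Set.Ioi (a : ℝ≥0∞)) ∈ nhdsWithin x (Set.Iio x) :=
        mem_nhdsWithin_of_mem_nhds (Ioi_mem_nhds hx)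
      have h2 : (fun _ : ℝ≥0∞ => (1 : ℝ)) =ᶠ[nhdsWithin x (Set.Iio x)]
          (fun y => if (a : ℝ≥0∞) < y then (1 : ℝ) else 0) := by
        filter_upwards [h1] with y hy
        exact (if_pos hy).symm
      have h3 : Filter.Tendsto (fun _ : ℝ≥0∞ => (1 : ℝ)) (nhdsWithin x (Set.Iio x))
          (nhds ((fun y => if (a : ℝ≥0∞) < y then (1 : ℝ) else 0) x)) := by
        simp only [if_pos hx]; exact tendsto_const_nhds
      exact Filter.Tendsto.congr' h2 h3
    · have h2 : (fun _ : ℝ≥0∞ => (0 : ℝ)) =ᶠ[nhdsWithin x (Set.Iio x)]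
          (fun y => if (a : ℝ≥0∞) < y then (1 : ℝ) else 0) := by
        filter_upwards [self_mem_nhdsWithin] with y hy
        have : ¬ (a : ℝ≥0∞) < y := fun h => hx (h.trans hy)
        exact (if_neg this).symm
      have h3 : Filter.Tendsto (fun _ : ℝ≥0∞ => (0 : ℝ)) (nhdsWithin x (Set.Iio x))
          (nhds ((fun y => if (a : ℝ≥0∞) < y then (1 : ℝ) else 0) x)) := by
        simp only [if_neg hx]; exact tendsto_const_nhds
      exact Filter.Tendsto.congr' h2 h3
  map_zero := by simp
  map_top := by simp [ENNReal.coe_lt_top]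
  nonneg := by intro x; (try dsimp only); split_ifs <;> norm_num
  le_one := by intro x; (try dsimp only); split_ifs <;> norm_num

/-- `ε₀`, the identity of triangle functions. -/
noncomputable def eps0 : DDF := epsD 0

/-- A triangle function on `Δ⁺`: commutative, associative, nondecreasing in
each argument, with `ε₀` as identity. -/
structure TriangleFn where
  op : DDF → DDF → DDF
  comm : ∀ G H, op G H = op H G
  assoc : ∀ G H K, op (op G H) K = op G (op H K)
  mono_left : ∀ ⦃G G'⦄ (H : DDF), G ≤ G' → op G H ≤ op G' H
  mono_right : ∀ (G : DDF) ⦃H H'⦄, H ≤ H' → op G H ≤ op G H'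
  eps0_op : ∀ G, op eps0 G = G

theorem DDF.le_trans {G H K : DDF} (hGH : G ≤ H) (hHK : H ≤ K) : G ≤ K :=
  fun x => (hGH x).trans (hHK x)

theorem TriangleFn.op_aggregate_le {n : ℕ} (τ : TriangleFn) (τs : Fin n → TriangleFn)
    (hle : ∀ i, ∀ G H : DDF, τ.op G H ≤ (τs i).op G H) (α : (Fin n → DDF) → DDF)
    (hαmono : ∀ G H : Fin n → DDF, (∀ i, G i ≤ H i) → α G ≤ α H)
    (hdom : ∀ G H : Fin n → DDF, τ.op (α G) (α H) ≤ α (fun i => τ.op (G i) (H i)))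
    {G H K : Fin n → DDF} (hK : ∀ i, (τs i).op (G i) (H i) ≤ K i) :
    τ.op (α G) (α H) ≤ α K :=
  DDF.le_trans (hdom G H) <| hαmono _ _ fun i => DDF.le_trans (hle i (G i) (H i)) (hK i)

theorem stmt5_general {Ω : Type*} (𝒮 : Set (Set Ω))
    (n : ℕ) (τ : TriangleFn) (τs : Fin n → TriangleFn)
    (hle : ∀ i : Fin n, ∀ G H : DDF, (τ.op G H) ≤ (τs i).op G H)
    (α : (Fin n → DDF) → DDF)
    (hαmono : ∀ G H : Fin n → DDF, (∀ i, G i ≤ H i) → α G ≤ α H)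
    (hαeps : α (fun _ => eps0) = eps0)
    (hdom : ∀ G H : Fin n → DDF,
      τ.op (α G) (α H) ≤ α (fun i => τ.op (G i) (H i)))
    (γs : Fin n → Set Ω → DDF)
    (hempty : ∀ i, γs i ∅ = eps0)
    (hsub : ∀ i, ∀ E F : Set Ω, E ∈ 𝒮 → F ∈ 𝒮 → Disjoint E F →
      (τs i).op (γs i E) (γs i F) ≤ γs i (E ∪ F)) :
    α (fun i => γs i ∅) = eps0 ∧
      ∀ E F : Set Ω, E ∈ 𝒮 → F ∈ 𝒮 → Disjoint E F →
        τ.op (α fun i => γs i E) (α fun i => γs i F) ≤ α (fun i => γs i (E ∪ F)) := by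
  refine ⟨by simpa only [hempty] using hαeps, fun E F hE hF hEF => ?_⟩
  exact τ.op_aggregate_le τs hle α hαmono hdom fun i => hsub i E F hE hF hEF

/-- Aggregation of `τᵢ`-decomposable submeasures by an `n`-ary aggregation operator
dominating a common lower bound `τ` of the `τᵢ` is a `τ`-decomposable submeasure. -/
theorem stmt5 {Ω : Type*} [Nonempty Ω] (𝒮 : Set (Set Ω))
    (h𝒮 : MeasureTheory.IsSetRing 𝒮) (n : ℕ) (τ : TriangleFn) (τs : Fin n → TriangleFn)
    (hle : ∀ i : Fin n, ∀ G H : DDF, (τ.op G H) ≤ (τs i).op G H)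
    (α : (Fin n → DDF) → DDF)
    (hαmono : ∀ G H : Fin n → DDF, (∀ i, G i ≤ H i) → α G ≤ α H)
    (hαeps : α (fun _ => eps0) = eps0)
    (hdom : ∀ G H : Fin n → DDF,
      τ.op (α G) (α H) ≤ α (fun i => τ.op (G i) (H i)))
    (γs : Fin n → Set Ω → DDF)
    (hempty : ∀ i, γs i ∅ = eps0)
    (hsub : ∀ i, ∀ E F : Set Ω, E ∈ 𝒮 → F ∈ 𝒮 → Disjoint E F →
      (τs i).op (γs i E) (γs i F) ≤ γs i (E ∪ F)) :
    α (fun i => γs i ∅) = eps0 ∧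
      ∀ E F : Set Ω, E ∈ 𝒮 → F ∈ 𝒮 → Disjoint E F →
        τ.op (α fun i => γs i E) (α fun i => γs i F) ≤ α (fun i => γs i (E ∪ F)) :=
  stmt5_general 𝒮 n τ τs hle α hαmono hαeps hdom γs hempty hsub
end

section
/- With Γ the set of probabilistic pseudo-metrics with respect to a triangle function τ on Σ, the order ρ ⪯ ϱ defined by ρ(E,F) ≥ ϱ(E,F) for all E, F, and the operation ⊕_ϑ (ρ ⊕_ϑ ϱ)(E,F) := ϑ(ρ(E,F), ϱ(E,F)) for a triangle function ϑ dominating τ: the triple (Γ, ⊕_ϑ, ⪯) is a partially ordered commutative semigroup with neutral element ν, where ν(E,F) = ε₀ for all E, F. In particular ⊕_ϑ is commutative, associative, has ν as identity, and is compatible with ⪯: ρ ⪯ ϱ implies ρ ⊕_ϑ σ ⪯ ϱ ⊕_ϑ σ. -/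
open scoped ENNReal NNReal symmDiff

/-- A probabilistic pseudo-metric with respect to the triangle function `τ`. -/
def IsPPM {X : Type*} (τ : TriangleFn) (ρ : X → X → DDF) : Prop :=
  (∀ E, ρ E E = eps0) ∧ (∀ E F, ρ E F = ρ F E) ∧
    (∀ E F G, τ.op (ρ E F) (ρ F G) ≤ ρ E G)

instance : Preorder DDF where
  le_refl _ _ := le_rfl
  le_trans _ _ _ h₁ h₂ x := (h₁ x).trans (h₂ x)

namespace TriangleFn

theorem op_mono (τ : TriangleFn) {G G' H H' : DDF} (hG : G ≤ G') (hH : H ≤ H') :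
    τ.op G H ≤ τ.op G' H' :=
  (τ.mono_left H hG).trans (τ.mono_right G' hH)

/-- `ϑ ≫ τ`. -/
def Dominates (ϑ τ : TriangleFn) : Prop :=
  ∀ a b c d : DDF, τ.op (ϑ.op a c) (ϑ.op b d) ≤ ϑ.op (τ.op a b) (τ.op c d)

end TriangleFn

namespace IsPPM

variable {X : Type*} {τ : TriangleFn}

theorem const_eps0 : IsPPM τ (fun _ _ : X => eps0) :=
  ⟨fun _ => rfl, fun _ _ => rfl, fun _ _ _ => by rw [τ.eps0_op]⟩

theorem op_of_dominates {ϑ : TriangleFn} (hdom : ϑ.Dominates τ) {ρ σ : X → X → DDF}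
    (hρ : IsPPM τ ρ) (hσ : IsPPM τ σ) : IsPPM τ (fun E F => ϑ.op (ρ E F) (σ E F)) := by
  obtain ⟨hρ_self, hρ_symm, hρ_tri⟩ := hρ
  obtain ⟨hσ_self, hσ_symm, hσ_tri⟩ := hσ
  refine ⟨fun E => ?_, fun E F => ?_, fun E F G => ?_⟩
  · exact (congrArg₂ ϑ.op (hρ_self E) (hσ_self E)).trans (ϑ.eps0_op eps0)
  · exact congrArg₂ ϑ.op (hρ_symm E F) (hσ_symm E F)
  · exact (hdom _ _ _ _).trans (ϑ.op_mono (hρ_tri E F G) (hσ_tri E F G))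

end IsPPM

theorem stmt10_general {X : Type*} (τ ϑ : TriangleFn)
    (hdom : ∀ a b c d : DDF, τ.op (ϑ.op a c) (ϑ.op b d) ≤ ϑ.op (τ.op a b) (τ.op c d)) :
    let oplus : (X → X → DDF) → (X → X → DDF) → (X → X → DDF) :=
      fun ρ σ E F => ϑ.op (ρ E F) (σ E F)
    let nu : X → X → DDF := fun _ _ => eps0
    let prec : (X → X → DDF) → (X → X → DDF) → Prop :=
      fun ρ σ => ∀ E F, σ E F ≤ ρ E F
    IsPPM τ nu ∧
      (∀ ρ σ, IsPPM τ ρ → IsPPM τ σ → IsPPM τ (oplus ρ σ)) ∧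
      (∀ ρ σ, oplus ρ σ = oplus σ ρ) ∧
      (∀ ρ σ π, oplus (oplus ρ σ) π = oplus ρ (oplus σ π)) ∧
      (∀ ρ, oplus nu ρ = ρ) ∧
      (∀ ρ σ π, IsPPM τ ρ → IsPPM τ σ → IsPPM τ π →
        prec ρ σ → prec (oplus ρ π) (oplus σ π)) := by
  intro oplus nu prec
  refine ⟨IsPPM.const_eps0, fun ρ σ hρ hσ => hρ.op_of_dominates hdom hσ,
    fun ρ σ => ?_, fun ρ σ π => ?_, fun ρ => ?_, fun ρ σ π _ _ _ h E F => ϑ.mono_left _ (h E F)⟩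
  all_goals funext E F
  · exact ϑ.comm _ _
  · exact ϑ.assoc _ _ _
  · exact ϑ.eps0_op _

/-- `(Γ_τ, ⊕_ϑ, ⪯)` is a partially ordered commutative semigroup with neutral
element `ν ≡ ε₀`. -/
theorem stmt10 {X : Type*} [Nonempty X] (τ ϑ : TriangleFn)
    (hdom : ∀ a b c d : DDF, τ.op (ϑ.op a c) (ϑ.op b d) ≤ ϑ.op (τ.op a b) (τ.op c d)) :
    let oplus : (X → X → DDF) → (X → X → DDF) → (X → X → DDF) :=
      fun ρ σ E F => ϑ.op (ρ E F) (σ E F)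
    let nu : X → X → DDF := fun _ _ => eps0
    let prec : (X → X → DDF) → (X → X → DDF) → Prop :=
      fun ρ σ => ∀ E F, σ E F ≤ ρ E F
    IsPPM τ nu ∧
      (∀ ρ σ, IsPPM τ ρ → IsPPM τ σ → IsPPM τ (oplus ρ σ)) ∧
      (∀ ρ σ, oplus ρ σ = oplus σ ρ) ∧
      (∀ ρ σ π, oplus (oplus ρ σ) π = oplus ρ (oplus σ π)) ∧
      (∀ ρ, oplus nu ρ = ρ) ∧
      (∀ ρ σ π, IsPPM τ ρ → IsPPM τ σ → IsPPM τ π →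
        prec ρ σ → prec (oplus ρ π) (oplus σ π)) :=
  stmt10_general τ ϑ hdom
end

section
/- Let τ be a triangle function, Σ = P(Ω), and Λ: Σ → Δ⁺ any set function with Λ(∅) = ε₀ and Λ(Ω) such that Λ(Ω) satisfies the measurability equations below. Call E ∈ Σ Λ-measurable w.r.t. τ if Λ(G) = τ(Λ(G ∩ E), Λ(G ∩ Eᶜ)) for every G ∈ Σ. Then the collection S_τ of all Λ-measurable sets w.r.t. τ is an algebra of sets: it contains ∅ and Ω, is closed under complementation, and is closed under finite unions. -/
open scoped ENNReal NNReal symmDiff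

theorem TriangleFn.op_eps0 (τ : TriangleFn) (G : DDF) : τ.op G eps0 = G := by
  rw [τ.comm, τ.eps0_op]

/-- Carathéodory's splitting condition with `τ` in place of addition. -/
def IsLambdaMeasurable {Ω : Type*} (τ : TriangleFn) (Λ : Set Ω → DDF) (E : Set Ω) : Prop :=
  ∀ G : Set Ω, Λ G = τ.op (Λ (G ∩ E)) (Λ (G ∩ Eᶜ))

namespace IsLambdaMeasurable

variable {Ω : Type*} {τ : TriangleFn} {Λ : Set Ω → DDF} {E F : Set Ω}

theorem empty (hempty : Λ ∅ = eps0) : IsLambdaMeasurable τ Λ ∅ := fun G => by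
  rw [Set.inter_empty, Set.compl_empty, Set.inter_univ, hempty, τ.eps0_op]

theorem univ (hempty : Λ ∅ = eps0) : IsLambdaMeasurable τ Λ Set.univ := fun G => by
  rw [Set.inter_univ, Set.compl_univ, Set.inter_empty, hempty, τ.op_eps0]

theorem compl (hE : IsLambdaMeasurable τ Λ E) : IsLambdaMeasurable τ Λ Eᶜ := fun G => by
  rw [compl_compl, τ.comm]
  exact hE G

theorem union (hE : IsLambdaMeasurable τ Λ E) (hF : IsLambdaMeasurable τ Λ F) :
    IsLambdaMeasurable τ Λ (E ∪ F) := fun G => by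
  have hE_part : G ∩ (E ∪ F) ∩ E = G ∩ E := by
    rw [Set.inter_assoc, Set.union_inter_cancel_left]
  have hEc_part : G ∩ (E ∪ F) ∩ Eᶜ = G ∩ Eᶜ ∩ F := by
    rw [Set.inter_assoc, Set.inter_assoc, Set.union_inter_distrib_right, Set.inter_compl_self,
      Set.empty_union, Set.inter_comm F]
  have hcompl_part : G ∩ Eᶜ ∩ Fᶜ = G ∩ (E ∪ F)ᶜ := by
    rw [Set.compl_union, Set.inter_assoc]
  calc Λ G = τ.op (Λ (G ∩ E)) (Λ (G ∩ Eᶜ)) := hE G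
    _ = τ.op (Λ (G ∩ E)) (τ.op (Λ (G ∩ Eᶜ ∩ F)) (Λ (G ∩ Eᶜ ∩ Fᶜ))) := by rw [← hF (G ∩ Eᶜ)]
    _ = τ.op (τ.op (Λ (G ∩ E)) (Λ (G ∩ Eᶜ ∩ F))) (Λ (G ∩ Eᶜ ∩ Fᶜ)) := (τ.assoc _ _ _).symm
    _ = τ.op (Λ (G ∩ (E ∪ F))) (Λ (G ∩ (E ∪ F)ᶜ)) := by
      rw [hcompl_part, hE (G ∩ (E ∪ F)), hE_part, hEc_part]

end IsLambdaMeasurable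

theorem stmt17_general {Ω : Type*} (τ : TriangleFn) (Λ : Set Ω → DDF)
    (hempty : Λ ∅ = eps0) :
    let Meas : Set Ω → Prop :=
      fun E => ∀ G : Set Ω, Λ G = τ.op (Λ (G ∩ E)) (Λ (G ∩ Eᶜ))
    Meas ∅ ∧ Meas Set.univ ∧ (∀ E, Meas E → Meas Eᶜ) ∧
      (∀ E F, Meas E → Meas F → Meas (E ∪ F)) :=
  ⟨IsLambdaMeasurable.empty hempty, IsLambdaMeasurable.univ hempty,
    fun _ => IsLambdaMeasurable.compl, fun _ _ => IsLambdaMeasurable.union⟩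

/-- The collection of `Λ`-measurable sets w.r.t. a triangle function `τ`
is an algebra of sets. -/
theorem stmt17 {Ω : Type*} [Nonempty Ω] (τ : TriangleFn) (Λ : Set Ω → DDF)
    (hempty : Λ ∅ = eps0) :
    let Meas : Set Ω → Prop :=
      fun E => ∀ G : Set Ω, Λ G = τ.op (Λ (G ∩ E)) (Λ (G ∩ Eᶜ))
    Meas ∅ ∧ Meas Set.univ ∧ (∀ E, Meas E → Meas Eᶜ) ∧
      (∀ E F, Meas E → Meas F → Meas (E ∪ F)) :=
  stmt17_general τ Λ hempty
end
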